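/- arXiv:2306.16915 — 2 statements merged into one kernel-verified Lean document; each statement's English description precedes it below -/
import Mathlib

section
/- Let N be a positive integer and let A, B ⊆ [N]^3 be disjoint sets with A ∪ B = [N]^3. Then at least one of the six 2-dimensional axis-parallel projections π_XY(A), π_YZ(A), π_XZ(A), π_XY(B), π_YZ(B), π_XZ(B) has cardinality at least (3/4)·N². -/
/-!
Write `Z_A` for the set of `(x, y)` whose whole line `{(x, y, z)}` lies in `A`, and similarly
`X_A, Y_A, Z_B, …`. Since `B` is the complement of `A`, `|π_XY(A)| = N² - |Z_B|`, so if all six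
projections are smaller than `3N²/4`, all six full-line sets have more than `N²/4` elements.
A set of pairs is contained in the product of its two shadows, and a line of `A` and a line of
`B` cannot meet: e.g. `Z_A` and `Y_B` have disjoint shadows on the `x`-axis, so the product of
the sizes of these shadows is at most `N²/4`. Going once around the cycle
`Z_A, Y_B, X_A, Z_B, Y_A, X_B`, the product of the six set sizes is at most the product of six
such pairs of shadow sizes, i.e. at most `(N²/4)⁶`, a contradiction.
-/

open Finset

namespace Finset

variable {α β : Type*} [Fintype α] [DecidableEq α] [Fintype β] [DecidableEq β]

/-- The finset analogue of `Set.kernImage`. -/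
def kernImage (f : α → β) (s : Finset α) : Finset β :=
  univ.filter fun b => ∀ a, f a = b → a ∈ s

theorem mem_kernImage {f : α → β} {s : Finset α} {b : β} :
    b ∈ kernImage f s ↔ ∀ a, f a = b → a ∈ s := by
  simp [kernImage]

theorem image_compl_eq_compl_kernImage (f : α → β) (s : Finset α) :
    sᶜ.image f = (kernImage f s)ᶜ := by
  ext b
  simp [mem_kernImage, and_comm]

theorem card_image_add_card_kernImage_of_isCompl (f : α → β) {s t : Finset α}
    (hst : IsCompl s t) : #(t.image f) + #(kernImage f s) = Fintype.card β := by
  rw [← hst.compl_eq, image_compl_eq_compl_kernImage, card_compl_add_card]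

theorem disjoint_image_kernImage {γ δ : Type*} [Fintype γ] [DecidableEq γ] [DecidableEq δ]
    {f : α → β} {g : α → γ} {u : β → δ} {v : γ → δ} {s t : Finset α} (hst : Disjoint s t)
    (hfg : ∀ b c, u b = v c → ∃ a, f a = b ∧ g a = c) :
    Disjoint ((kernImage f s).image u) ((kernImage g t).image v) := by
  simp only [disjoint_left, mem_image, mem_kernImage]
  rintro _ ⟨b, hb, rfl⟩ ⟨c, hc, huv⟩
  obtain ⟨a, rfl, rfl⟩ := hfg b c huv.symm
  exact disjoint_left.1 hst (hb a rfl) (hc a rfl)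

end Finset

theorem Finset.card_le_card_image_fst_mul_card_image_snd {α β : Type*} [DecidableEq α]
    [DecidableEq β] (s : Finset (α × β)) : #s ≤ #(s.image Prod.fst) * #(s.image Prod.snd) :=
  (card_le_card subset_product).trans_eq (card_product _ _)

theorem Finset.card_mul_card_le_sq_div_four {α : Type*} [Fintype α] [DecidableEq α]
    {s t : Finset α} (h : Disjoint s t) : (#s : ℝ) * #t ≤ Fintype.card α ^ 2 / 4 := by
  have hsum : (#s : ℝ) + #t ≤ Fintype.card α := by
    exact_mod_cast (card_union_of_disjoint h).symm.trans_le (card_le_univ _)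
  nlinarith [sq_nonneg ((#s : ℝ) - #t)]

theorem Finset.exists_le_of_le_mul_of_mul_comp_perm_le {R ι : Type*} [CommSemiring R]
    [LinearOrder R] [IsStrictOrderedRing R] [Fintype ι] [Nonempty ι] (σ : Equiv.Perm ι)
    {s p q : ι → R} {M : R} (hp : ∀ i, 0 ≤ p i) (hq : ∀ i, 0 ≤ q i)
    (hs : ∀ i, s i ≤ p i * q i) (hpq : ∀ i, q i * p (σ i) ≤ M) : ∃ i, s i ≤ M := by
  by_contra! hM
  obtain ⟨i₀⟩ := ‹Nonempty ι›
  have hM₀ : 0 ≤ M := (mul_nonneg (hq i₀) (hp _)).trans (hpq i₀)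
  have hs₀ : ∀ i, 0 < s i := fun i => hM₀.trans_lt (hM i)
  have hle : ∏ i, s i ≤ ∏ _i : ι, M :=
    calc ∏ i, s i ≤ ∏ i, p i * q i := prod_le_prod (fun i _ => (hs₀ i).le) (fun i _ => hs i)
      _ = ∏ i, q i * p (σ i) := by
        rw [prod_mul_distrib, prod_mul_distrib, Equiv.prod_comp, mul_comm]
      _ ≤ ∏ _i : ι, M := prod_le_prod (fun i _ => mul_nonneg (hq i) (hp _)) (fun i _ => hpq i)
  have hlt : ∏ _i : ι, M < ∏ i, s i := by
    rcases hM₀.eq_or_lt with rfl | hM₀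
    · rw [prod_eq_zero (mem_univ i₀) rfl]
      exact prod_pos fun i _ => hs₀ i
    · exact prod_lt_prod_of_nonempty (fun _ _ => hM₀) (fun i _ => hM i) univ_nonempty
  exact (hle.trans_lt hlt).false

section Cube

variable {α : Type*} [Fintype α] [DecidableEq α]

def projXY (p : α × α × α) : α × α := (p.1, p.2.1)

def projYZ (p : α × α × α) : α × α := (p.2.1, p.2.2)

def projXZ (p : α × α × α) : α × α := (p.1, p.2.2)

theorem exists_card_kernImage_proj_le {A B : Finset (α × α × α)} (h : Disjoint A B) :
    (#(kernImage projXY B) : ℝ) ≤ Fintype.card α ^ 2 / 4 ∨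
    (#(kernImage projYZ B) : ℝ) ≤ Fintype.card α ^ 2 / 4 ∨
    (#(kernImage projXZ B) : ℝ) ≤ Fintype.card α ^ 2 / 4 ∨
    (#(kernImage projXY A) : ℝ) ≤ Fintype.card α ^ 2 / 4 ∨
    (#(kernImage projYZ A) : ℝ) ≤ Fintype.card α ^ 2 / 4 ∨
    (#(kernImage projXZ A) : ℝ) ≤ Fintype.card α ^ 2 / 4 := by
  have hx : ∀ b c : α × α, b.1 = c.1 → ∃ a, projXY a = b ∧ projXZ a = c := by
    rintro ⟨x, y⟩ ⟨x', z⟩ (rfl : x = x')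
    exact ⟨(x, y, z), rfl, rfl⟩
  have hz : ∀ b c : α × α, b.2 = c.2 → ∃ a, projXZ a = b ∧ projYZ a = c := by
    rintro ⟨x, z⟩ ⟨y, z'⟩ (rfl : z = z')
    exact ⟨(x, y, z), rfl, rfl⟩
  have hy : ∀ b c : α × α, b.1 = c.2 → ∃ a, projYZ a = b ∧ projXY a = c := by
    rintro ⟨y, z⟩ ⟨x, y'⟩ (rfl : y = y')
    exact ⟨(x, y, z), rfl, rfl⟩
  have hL : ∀ L : Finset (α × α), (#L : ℝ) ≤ #(L.image Prod.fst) * #(L.image Prod.snd) :=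
    fun L => mod_cast card_le_card_image_fst_mul_card_image_snd L
  -- `p i`, `q i` are the shadows of the `i`-th set on the axes it shares with its predecessor and
  -- its successor in the cycle `ZA, YB, XA, ZB, YA, XB`
  set ZA := kernImage projXY A
  set YB := kernImage projXZ B
  set XA := kernImage projYZ A
  set ZB := kernImage projXY B
  set YA := kernImage projXZ A
  set XB := kernImage projYZ B
  obtain ⟨i, hi⟩ := exists_le_of_le_mul_of_mul_comp_perm_le (finRotate 6)
    (s := fun i => (#(![ZA, YB, XA, ZB, YA, XB] i) : ℝ))
    (p := fun i => #(![ZA.image Prod.snd, YB.image Prod.fst, XA.image Prod.snd,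
      ZB.image Prod.snd, YA.image Prod.fst, XB.image Prod.snd] i))
    (q := fun i => #(![ZA.image Prod.fst, YB.image Prod.snd, XA.image Prod.fst,
      ZB.image Prod.fst, YA.image Prod.snd, XB.image Prod.fst] i))
    (M := Fintype.card α ^ 2 / 4) (fun _ => by positivity) (fun _ => by positivity)
    (by
      intro i
      fin_cases i
      exacts [(hL ZA).trans_eq (mul_comm _ _), hL YB, (hL XA).trans_eq (mul_comm _ _),
        (hL ZB).trans_eq (mul_comm _ _), hL YA, (hL XB).trans_eq (mul_comm _ _)])
    (by
      intro i
      fin_cases i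
      exacts [card_mul_card_le_sq_div_four (disjoint_image_kernImage h hx),
        card_mul_card_le_sq_div_four (disjoint_image_kernImage h.symm hz),
        card_mul_card_le_sq_div_four (disjoint_image_kernImage h hy),
        card_mul_card_le_sq_div_four (disjoint_image_kernImage h.symm hx),
        card_mul_card_le_sq_div_four (disjoint_image_kernImage h hz),
        card_mul_card_le_sq_div_four (disjoint_image_kernImage h.symm hy)])
  fin_cases i <;> simp at hi <;> tauto

theorem exists_three_quarters_le_card_image_proj {A B : Finset (α × α × α)} (h : IsCompl A B) :
    3 / 4 * (Fintype.card α : ℝ) ^ 2 ≤ #(A.image projXY) ∨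
    3 / 4 * (Fintype.card α : ℝ) ^ 2 ≤ #(A.image projYZ) ∨
    3 / 4 * (Fintype.card α : ℝ) ^ 2 ≤ #(A.image projXZ) ∨
    3 / 4 * (Fintype.card α : ℝ) ^ 2 ≤ #(B.image projXY) ∨
    3 / 4 * (Fintype.card α : ℝ) ^ 2 ≤ #(B.image projYZ) ∨
    3 / 4 * (Fintype.card α : ℝ) ^ 2 ≤ #(B.image projXZ) := by
  have hproj {s t : Finset (α × α × α)} (f : α × α × α → α × α) (hst : IsCompl s t)
      (hs : (#(kernImage f s) : ℝ) ≤ Fintype.card α ^ 2 / 4) :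
      3 / 4 * (Fintype.card α : ℝ) ^ 2 ≤ #(t.image f) := by
    have hcard : (#(t.image f) : ℝ) + #(kernImage f s) = Fintype.card α ^ 2 := by
      exact_mod_cast (card_image_add_card_kernImage_of_isCompl f hst).trans
        (by rw [Fintype.card_prod, sq])
    linarith
  exact (exists_card_kernImage_proj_le h.disjoint).imp (hproj _ h.symm) <|
    .imp (hproj _ h.symm) <| .imp (hproj _ h.symm) <| .imp (hproj _ h) <|
    .imp (hproj _ h) (hproj _ h)

end Cube

theorem partition_projection_three_quarters_general (N : ℕ)
    (A B : Finset (Fin N × Fin N × Fin N))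
    (hdisj : Disjoint A B) (hcover : A ∪ B = Finset.univ) :
    (3/4 : ℝ) * N ^ 2 ≤ ((A.image (fun p => (p.1, p.2.1))).card : ℝ) ∨
    (3/4 : ℝ) * N ^ 2 ≤ ((A.image (fun p => (p.2.1, p.2.2))).card : ℝ) ∨
    (3/4 : ℝ) * N ^ 2 ≤ ((A.image (fun p => (p.1, p.2.2))).card : ℝ) ∨
    (3/4 : ℝ) * N ^ 2 ≤ ((B.image (fun p => (p.1, p.2.1))).card : ℝ) ∨
    (3/4 : ℝ) * N ^ 2 ≤ ((B.image (fun p => (p.2.1, p.2.2))).card : ℝ) ∨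
    (3/4 : ℝ) * N ^ 2 ≤ ((B.image (fun p => (p.1, p.2.2))).card : ℝ) := by
  have h := exists_three_quarters_le_card_image_proj (A := A) (B := B)
    ⟨hdisj, codisjoint_iff.2 hcover⟩
  rwa [Fintype.card_fin] at h

/-- If `A, B` partition `[N]³`, then one of the six 2-dimensional axis-parallel
projections of `A` and `B` has size at least `(3/4) N²`. -/
theorem partition_projection_three_quarters (N : ℕ) (hN : 0 < N)
    (A B : Finset (Fin N × Fin N × Fin N))
    (hdisj : Disjoint A B) (hcover : A ∪ B = Finset.univ) :
    (3/4 : ℝ) * N ^ 2 ≤ ((A.image (fun p => (p.1, p.2.1))).card : ℝ) ∨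
    (3/4 : ℝ) * N ^ 2 ≤ ((A.image (fun p => (p.2.1, p.2.2))).card : ℝ) ∨
    (3/4 : ℝ) * N ^ 2 ≤ ((A.image (fun p => (p.1, p.2.2))).card : ℝ) ∨
    (3/4 : ℝ) * N ^ 2 ≤ ((B.image (fun p => (p.1, p.2.1))).card : ℝ) ∨
    (3/4 : ℝ) * N ^ 2 ≤ ((B.image (fun p => (p.2.1, p.2.2))).card : ℝ) ∨
    (3/4 : ℝ) * N ^ 2 ≤ ((B.image (fun p => (p.1, p.2.2))).card : ℝ) :=
  partition_projection_three_quarters_general N A B hdisj hcover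
end

section
/- Let A, B partition [N]^3 and suppose all six 2-dimensional projections of A and B onto the XY plane have the property that |π_XY(A)| ≤ (3/4)N² and |π_XY(B)| ≤ (3/4)N². Then one of the four projections |π_XZ(A)|, |π_XZ(B)|, |π_YZ(A)|, |π_YZ(B)| is at least (3/4)N². -/
open Finset

section Helpers

variable {N : ℕ}

/-- Rows of the slice at `z` entirely contained in `S`. -/
def rowFull (S : Finset (Fin N × Fin N × Fin N)) (z : Fin N) : Finset (Fin N) :=
  univ.filter (fun x => ∀ y, (x, y, z) ∈ S)

/-- Columns of the slice at `z` entirely contained in `S`. -/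
def colFull (S : Finset (Fin N × Fin N × Fin N)) (z : Fin N) : Finset (Fin N) :=
  univ.filter (fun y => ∀ x, (x, y, z) ∈ S)

/-- If the cross `r × univ ∪ univ × c` is contained in a set of size ≤ (3/4)N²,
then `|r| + |c| ≤ N`. -/
lemma cross_bound (hN : 0 < N) (r c : Finset (Fin N)) (P : Finset (Fin N × Fin N))
    (hsub : r ×ˢ (univ : Finset (Fin N)) ∪ (univ : Finset (Fin N)) ×ˢ c ⊆ P)
    (hP : (P.card : ℝ) ≤ (3/4 : ℝ) * N ^ 2) : r.card + c.card ≤ N := by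
  by_contra hcon
  push_neg at hcon
  have hinter : (r ×ˢ (univ : Finset (Fin N))) ∩ ((univ : Finset (Fin N)) ×ˢ c) = r ×ˢ c := by
    ext p
    simp [Finset.mem_inter, Finset.mem_product]

  have hcard : (r ×ˢ (univ : Finset (Fin N)) ∪ (univ : Finset (Fin N)) ×ˢ c).card
      + r.card * c.card = r.card * N + N * c.card := by
    rw [← Finset.card_product, ← hinter, Finset.card_union_add_card_inter]
    simp [Finset.card_product]
  have hle := Finset.card_le_card hsub
  have hr : r.card ≤ N := by
    simpa using Finset.card_le_card (Finset.subset_univ r)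
  have hc : c.card ≤ N := by
    simpa using Finset.card_le_card (Finset.subset_univ c)
  have hNr : (1 : ℝ) ≤ N := by exact_mod_cast hN
  have hrR : (r.card : ℝ) ≤ N := by exact_mod_cast hr
  have hcR : (c.card : ℝ) ≤ N := by exact_mod_cast hc
  have hconR : (N : ℝ) + 1 ≤ (r.card : ℝ) + c.card := by exact_mod_cast hcon
  have hcardR : (r.card : ℝ) * N + N * c.card ≤ (3/4 : ℝ) * N ^ 2 + (r.card : ℝ) * c.card := by
    have h1 : ((r ×ˢ (univ : Finset (Fin N)) ∪ (univ : Finset (Fin N)) ×ˢ c).card : ℝ)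
        ≤ (3/4 : ℝ) * N ^ 2 := le_trans (by exact_mod_cast hle) hP
    have h2 : ((r ×ˢ (univ : Finset (Fin N)) ∪ (univ : Finset (Fin N)) ×ˢ c).card : ℝ)
        + (r.card : ℝ) * c.card = (r.card : ℝ) * N + N * c.card := by
      exact_mod_cast congrArg (Nat.cast : ℕ → ℝ) hcard
    linarith
  nlinarith [sq_nonneg ((r.card : ℝ) - c.card), sq_nonneg ((r.card : ℝ) + c.card - 2 * N)]

/-- The per-slice inequality: the number of full-A rows, full-B rows, full-A columns
and full-B columns in any slice is at most `N`. -/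
lemma slice_bound (hN : 0 < N) (A B : Finset (Fin N × Fin N × Fin N))
    (hdisj : Disjoint A B)
    (hA : ((A.image (fun p => (p.1, p.2.1))).card : ℝ) ≤ (3/4 : ℝ) * N ^ 2)
    (hB : ((B.image (fun p => (p.1, p.2.1))).card : ℝ) ≤ (3/4 : ℝ) * N ^ 2)
    (z : Fin N) :
    (rowFull A z).card + (rowFull B z).card + (colFull A z).card + (colFull B z).card ≤ N := by
  classical
  have hmem : ∀ q : Fin N × Fin N × Fin N, q ∈ A → q ∈ B → False := by
    intro q hqA hqB
    exact Finset.disjoint_left.mp hdisj hqA hqB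
  -- a full-A row and a full-B column cannot coexist
  have h1 : rowFull A z = ∅ ∨ colFull B z = ∅ := by
    by_contra hcon
    push_neg at hcon
    obtain ⟨x, hx⟩ := hcon.1
    obtain ⟨y, hy⟩ := hcon.2
    simp only [rowFull, Finset.mem_filter] at hx
    simp only [colFull, Finset.mem_filter] at hy
    exact hmem (x, y, z) (hx.2 y) (hy.2 x)
  have h2 : rowFull B z = ∅ ∨ colFull A z = ∅ := by
    by_contra hcon
    push_neg at hcon
    obtain ⟨x, hx⟩ := hcon.1
    obtain ⟨y, hy⟩ := hcon.2
    simp only [rowFull, Finset.mem_filter] at hx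
    simp only [colFull, Finset.mem_filter] at hy
    exact hmem (x, y, z) (hy.2 x) (hx.2 y)
  -- disjointness of same-type row/column sets
  have hrow_disj : Disjoint (rowFull A z) (rowFull B z) := by
    rw [Finset.disjoint_left]
    intro x hxA hxB
    simp only [rowFull, Finset.mem_filter] at hxA hxB
    exact hmem (x, ⟨0, hN⟩, z) (hxA.2 _) (hxB.2 _)
  have hcol_disj : Disjoint (colFull A z) (colFull B z) := by
    rw [Finset.disjoint_left]
    intro y hyA hyB
    simp only [colFull, Finset.mem_filter] at hyA hyB
    exact hmem (⟨0, hN⟩, y, z) (hyA.2 _) (hyB.2 _)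
  have hrow_card : (rowFull A z).card + (rowFull B z).card ≤ N := by
    rw [← Finset.card_union_of_disjoint hrow_disj]
    simpa using Finset.card_le_univ (rowFull A z ∪ rowFull B z)
  have hcol_card : (colFull A z).card + (colFull B z).card ≤ N := by
    rw [← Finset.card_union_of_disjoint hcol_disj]
    simpa using Finset.card_le_univ (colFull A z ∪ colFull B z)
  have hcrossA : (rowFull A z).card + (colFull A z).card ≤ N := by
    apply cross_bound hN _ _ _ _ hA
    intro p hp
    rcases Finset.mem_union.mp hp with hp | hp
    · rcases Finset.mem_product.mp hp with ⟨hp1, _⟩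
      simp only [rowFull, Finset.mem_filter] at hp1
      exact Finset.mem_image.mpr ⟨(p.1, p.2, z), hp1.2 p.2, rfl⟩
    · rcases Finset.mem_product.mp hp with ⟨_, hp2⟩
      simp only [colFull, Finset.mem_filter] at hp2
      exact Finset.mem_image.mpr ⟨(p.1, p.2, z), hp2.2 p.1, rfl⟩
  have hcrossB : (rowFull B z).card + (colFull B z).card ≤ N := by
    apply cross_bound hN _ _ _ _ hB
    intro p hp
    rcases Finset.mem_union.mp hp with hp | hp
    · rcases Finset.mem_product.mp hp with ⟨hp1, _⟩
      simp only [rowFull, Finset.mem_filter] at hp1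
      exact Finset.mem_image.mpr ⟨(p.1, p.2, z), hp1.2 p.2, rfl⟩
    · rcases Finset.mem_product.mp hp with ⟨_, hp2⟩
      simp only [colFull, Finset.mem_filter] at hp2
      exact Finset.mem_image.mpr ⟨(p.1, p.2, z), hp2.2 p.1, rfl⟩
  rcases h1 with h1 | h1 <;> rcases h2 with h2 | h2 <;>
    simp_all

/-- Generic projection lower bound: if every `(x, z)` with `x ∉ g z` lies in `Q`,
then `N² ≤ |Q| + ∑ z |g z|`. -/
lemma proj_lb (Q : Finset (Fin N × Fin N)) (g : Fin N → Finset (Fin N))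
    (h : ∀ x z, x ∉ g z → (x, z) ∈ Q) :
    N * N ≤ Q.card + ∑ z, (g z).card := by
  classical
  have hsub : (univ.filter (fun p : Fin N × Fin N => p.1 ∉ g p.2)) ⊆ Q := by
    intro p hp
    simp only [Finset.mem_filter] at hp
    exact h p.1 p.2 hp.2
  have hsplit := Finset.card_filter_add_card_filter_not
    (s := (univ : Finset (Fin N × Fin N))) (p := fun p => p.1 ∉ g p.2)
  have huniv : (univ : Finset (Fin N × Fin N)).card = N * N := by
    simp
  have hcount : (univ.filter (fun p : Fin N × Fin N => ¬ p.1 ∉ g p.2)).card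
      = ∑ z, (g z).card := by
    rw [Finset.card_filter, Fintype.sum_prod_type]
    rw [Finset.sum_comm]
    congr 1
    ext z
    simp [Finset.card_filter]
  have hQ := Finset.card_le_card hsub
  omega

end Helpers

/-- If `A, B` partition `[N]³` and both XY-projections have size at most
`(3/4)N²`, then one of the four projections `π_XZ(A), π_XZ(B), π_YZ(A), π_YZ(B)`
has size at least `(3/4)N²`. -/
theorem other_projection_large (N : ℕ) (hN : 0 < N)
    (A B : Finset (Fin N × Fin N × Fin N))
    (hdisj : Disjoint A B) (hcover : A ∪ B = Finset.univ)
    (hA : ((A.image (fun p => (p.1, p.2.1))).card : ℝ) ≤ (3/4 : ℝ) * N ^ 2)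
    (hB : ((B.image (fun p => (p.1, p.2.1))).card : ℝ) ≤ (3/4 : ℝ) * N ^ 2) :
    (3/4 : ℝ) * N ^ 2 ≤ ((A.image (fun p => (p.1, p.2.2))).card : ℝ) ∨
    (3/4 : ℝ) * N ^ 2 ≤ ((B.image (fun p => (p.1, p.2.2))).card : ℝ) ∨
    (3/4 : ℝ) * N ^ 2 ≤ ((A.image (fun p => (p.2.1, p.2.2))).card : ℝ) ∨
    (3/4 : ℝ) * N ^ 2 ≤ ((B.image (fun p => (p.2.1, p.2.2))).card : ℝ) := by
  classical
  have hmemB : ∀ q : Fin N × Fin N × Fin N, q ∉ A → q ∈ B := by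
    intro q hq
    have : q ∈ A ∪ B := by rw [hcover]; exact Finset.mem_univ q
    rcases Finset.mem_union.mp this with h | h
    · exact absurd h hq
    · exact h
  have hmemA : ∀ q : Fin N × Fin N × Fin N, q ∉ B → q ∈ A := by
    intro q hq
    have : q ∈ A ∪ B := by rw [hcover]; exact Finset.mem_univ q
    rcases Finset.mem_union.mp this with h | h
    · exact h
    · exact absurd h hq
  -- four projection lower bounds
  have hXZB : N * N ≤ (B.image (fun p => (p.1, p.2.2))).card + ∑ z, (rowFull A z).card := by
    apply proj_lb
    intro x z hx
    simp only [rowFull, Finset.mem_filter, Finset.mem_univ, true_and, not_forall] at hx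
    obtain ⟨y, hy⟩ := hx
    exact Finset.mem_image.mpr ⟨(x, y, z), hmemB _ hy, rfl⟩
  have hXZA : N * N ≤ (A.image (fun p => (p.1, p.2.2))).card + ∑ z, (rowFull B z).card := by
    apply proj_lb
    intro x z hx
    simp only [rowFull, Finset.mem_filter, Finset.mem_univ, true_and, not_forall] at hx
    obtain ⟨y, hy⟩ := hx
    exact Finset.mem_image.mpr ⟨(x, y, z), hmemA _ hy, rfl⟩
  have hYZB : N * N ≤ (B.image (fun p => (p.2.1, p.2.2))).card + ∑ z, (colFull A z).card := by
    apply proj_lb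
    intro y z hy
    simp only [colFull, Finset.mem_filter, Finset.mem_univ, true_and, not_forall] at hy
    obtain ⟨x, hx⟩ := hy
    exact Finset.mem_image.mpr ⟨(x, y, z), hmemB _ hx, rfl⟩
  have hYZA : N * N ≤ (A.image (fun p => (p.2.1, p.2.2))).card + ∑ z, (colFull B z).card := by
    apply proj_lb
    intro y z hy
    simp only [colFull, Finset.mem_filter, Finset.mem_univ, true_and, not_forall] at hy
    obtain ⟨x, hx⟩ := hy
    exact Finset.mem_image.mpr ⟨(x, y, z), hmemA _ hx, rfl⟩
  -- summed slice bound
  have hsum : (∑ z, (rowFull A z).card) + (∑ z, (rowFull B z).card)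
      + (∑ z, (colFull A z).card) + (∑ z, (colFull B z).card) ≤ N * N := by
    have := Finset.sum_le_sum (fun z _ =>
      slice_bound hN A B hdisj hA hB z : ∀ z ∈ (univ : Finset (Fin N)), _)
    simp only [Finset.sum_const, Finset.card_univ, Fintype.card_fin, smul_eq_mul, mul_one] at this
    calc (∑ z, (rowFull A z).card) + (∑ z, (rowFull B z).card)
        + (∑ z, (colFull A z).card) + (∑ z, (colFull B z).card)
        = ∑ z, ((rowFull A z).card + (rowFull B z).card
          + (colFull A z).card + (colFull B z).card) := by
          simp [Finset.sum_add_distrib]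
      _ ≤ N * N := this
  -- conclude by contradiction
  by_contra hcon
  push_neg at hcon
  obtain ⟨c1, c2, c3, c4⟩ := hcon
  have hNN : ((N : ℝ)) * N = (N : ℝ) ^ 2 := by ring
  have e1 : ((N : ℝ)) * N ≤ ((A.image (fun p => (p.1, p.2.2))).card : ℝ)
      + ((∑ z, (rowFull B z).card : ℕ) : ℝ) := by exact_mod_cast hXZA
  have e2 : ((N : ℝ)) * N ≤ ((B.image (fun p => (p.1, p.2.2))).card : ℝ)
      + ((∑ z, (rowFull A z).card : ℕ) : ℝ) := by exact_mod_cast hXZB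
  have e3 : ((N : ℝ)) * N ≤ ((A.image (fun p => (p.2.1, p.2.2))).card : ℝ)
      + ((∑ z, (colFull B z).card : ℕ) : ℝ) := by exact_mod_cast hYZA
  have e4 : ((N : ℝ)) * N ≤ ((B.image (fun p => (p.2.1, p.2.2))).card : ℝ)
      + ((∑ z, (colFull A z).card : ℕ) : ℝ) := by exact_mod_cast hYZB
  have esum : ((∑ z, (rowFull A z).card : ℕ) : ℝ) + ((∑ z, (rowFull B z).card : ℕ) : ℝ)
      + ((∑ z, (colFull A z).card : ℕ) : ℝ) + ((∑ z, (colFull B z).card : ℕ) : ℝ)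
      ≤ (N : ℝ) * N := by exact_mod_cast hsum
  nlinarith [sq_nonneg ((N : ℝ))]
end
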